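/- Main theorem (semantic form of G ⊆ S₂): every real x that has an infinite Gray code in the coinductive sense (there exists a digit stream q with R_G(q,x)) has a signed digit representation: there exists p : ℕ → {-1,0,1} with x = Σ_{i=0}^∞ p_i · 2^{-(i+1)}. -/

import Mathlib

/-- Gray-code digits: `none` is ⊥, `some false` is L, `some true` is R. -/
abbrev GDigit := Option Bool

def RD (a : GDigit) (x : ℝ) : Prop :=
  (x < 0 ∧ a = some false) ∨ (x > 0 ∧ a = some true) ∨ x = 0

/-- `GrayRel q x`: `x` has infinite Gray code `q`, defined as the greatest
relation satisfying the unfolding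
`R(a::q, x) ↔ -1 ≤ x ≤ 1 ∧ R_D(a,x) ∧ R(q, 1 - 2|x|)`. -/
def GrayRel (q : ℕ → GDigit) (x : ℝ) : Prop :=
  ∃ R : (ℕ → GDigit) → ℝ → Prop,
    (∀ q x, R q x →
      -1 ≤ x ∧ x ≤ 1 ∧ RD (q 0) x ∧ R (fun i => q (i + 1)) (1 - 2 * |x|)) ∧
    R q x

def consD (a : GDigit) (s : ℕ → GDigit) : ℕ → GDigit :=
  fun n => match n with | 0 => a | n + 1 => s n

def notD : GDigit → GDigit
  | none => none
  | some b => some (!b)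


/-!
A Gray code only constrains `x` to lie in `[-1, 1]`, and every such `x` has a signed-digit
expansion with digits `±1`: write `(x + 1) / 2 = ∑ dᵢ / 2^(i+1)` in binary and take
`pᵢ = 2 dᵢ - 1`, using `∑ 1 / 2^(i+1) = 1`.
-/

theorem GrayRel.mem_Icc {q : ℕ → GDigit} {x : ℝ} (h : GrayRel q x) : x ∈ Set.Icc (-1) 1 := by
  obtain ⟨R, hR, hqx⟩ := h
  obtain ⟨hle, hge, -⟩ := hR q x hqx
  exact ⟨hle, hge⟩

theorem exists_hasSum_signedDigits_of_mem_Icc {x : ℝ} (hx : x ∈ Set.Icc (-1) 1) :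
    ∃ p : ℕ → ℤ, (∀ i, p i = -1 ∨ p i = 1) ∧ HasSum (fun i ↦ (p i : ℝ) / 2 ^ (i + 1)) x := by
  have hy : (x + 1) / 2 ∈ Set.Icc (0 : ℝ) 1 := by
    constructor <;> linarith [hx.1, hx.2]
  obtain ⟨d, -, hd⟩ := Real.ofDigits_SurjOn (b := 2) one_lt_two hy
  refine ⟨fun i ↦ 2 * (d i : ℤ) - 1, fun i ↦ ?_, ?_⟩
  · rcases Fin.exists_fin_two.mp ⟨d i, rfl⟩ with hi | hi <;> simp [hi]
  have hbin : HasSum (Real.ofDigitsTerm d) ((x + 1) / 2) :=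
    hd ▸ Real.summable_ofDigitsTerm.hasSum
  have hterm (i : ℕ) : ((2 * (d i : ℤ) - 1 : ℤ) : ℝ) / 2 ^ (i + 1) =
      2 * Real.ofDigitsTerm d i - 1 / 2 / 2 ^ i := by
    simp only [Real.ofDigitsTerm]
    push_cast
    field_simp
    ring
  have h := (hbin.mul_left 2).sub (hasSum_geometric_two' 1)
  rwa [show 2 * ((x + 1) / 2) - 1 = x by ring, ← funext hterm] at h

theorem gray_subset_signed_digit (x : ℝ) (h : ∃ q : ℕ → GDigit, GrayRel q x) :
    ∃ p : ℕ → ℤ, (∀ i, p i = -1 ∨ p i = 0 ∨ p i = 1) ∧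
      x = ∑' i : ℕ, (p i : ℝ) / 2 ^ (i + 1) := by
  obtain ⟨q, hq⟩ := h
  obtain ⟨p, hp, hsum⟩ := exists_hasSum_signedDigits_of_mem_Icc hq.mem_Icc
  exact ⟨p, fun i ↦ (hp i).imp_right Or.inr, hsum.tsum_eq.symm⟩
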